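/- Let X be a proper geodesic metric space with a group G acting by isometries. If α and β are two isometries with invariant axes A_α, A_β of translation lengths ℓ(α), ℓ(β), and l is a geodesic segment of length d connecting A_α and A_β, then the translation length of αβ satisfies ℓ(αβ) ≤ ℓ(α) + 2d + ℓ(β). -/
import Mathlib

/-- In a metric space `X` on which `α` and `β` act as isometries with invariant axes
`Aα`, `Aβ` (on which they translate by `ℓα`, `ℓβ` respectively), if a geodesic segment
of length `d` connects a point `a ∈ Aα` to a point `b ∈ Aβ`, then the translation length
`inf_x d(x, αβx)` of `αβ` satisfies `ℓ(αβ) ≤ ℓα + 2d + ℓβ`. -/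
theorem translation_length_comp_le {X : Type*} [MetricSpace X]
    (α β : X → X) (hα : Isometry α) (hβ : Isometry β)
    (Aα Aβ : Set X) (ℓα ℓβ d : ℝ)
    (hinvα : ∀ x ∈ Aα, α x ∈ Aα) (hinvβ : ∀ x ∈ Aβ, β x ∈ Aβ)
    (htransα : ∀ x ∈ Aα, dist x (α x) = ℓα)
    (htransβ : ∀ x ∈ Aβ, dist x (β x) = ℓβ)
    (a b : X) (ha : a ∈ Aα) (hb : b ∈ Aβ) (hd : dist a b = d) :
    ⨅ x : X, dist x (α (β x)) ≤ ℓα + 2 * d + ℓβ := by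
  refine ciInf_le_of_le ⟨0, fun y ⟨x, hx⟩ => hx ▸ dist_nonneg⟩ b ?_
  calc dist b (α (β b)) ≤ dist b a + dist a (α a) + dist (α a) (α (β b)) :=
        dist_triangle4 _ _ _ _
    _ = dist a b + ℓα + dist a (β b) := by
        rw [dist_comm b a, htransα a ha, hα.dist_eq]
    _ ≤ d + ℓα + (dist a b + dist b (β b)) := by
        rw [hd]; have := dist_triangle a b (β b); linarith
    _ = ℓα + 2 * d + ℓβ := by rw [hd, htransβ b hb]; ring
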